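/- arXiv:1509.07312 — 7 statements merged into one kernel-verified Lean document; each statement's English description precedes it below -/
import Mathlib

section
/- Let m ≥ 1 and let Q be a quantum matrix of size m. The following are equivalent: (1) the rank of Q equals 1; (2) Q i k = Q i j · Q j k for all i < j < k in Fin m; (3) the point cone V_Q equals the set of all nonzero vectors u : Fin m → ℂ. -/
/-!
Inverting entries (`Q i j * Q j i = 1`) lets the relation `Q i k = Q i j * Q j k` on increasing
triples propagate to `Q i k = Q i 0 * Q 0 k` for all `i, k`, i.e. `Q` is the rank-one matrix
`vecMulVec (Q · 0) (Q 0 ·)`. Conversely, in a matrix of rank one every `2 × 2` minor vanishes,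
and the minor on rows `i, j` and columns `j, k` is `Q i k - Q i j * Q j k` since `Q j j = 1`.
The point cone contains the all-ones vector exactly when every cubic coefficient vanishes.
-/

/-- A quantum matrix of size `m`: all entries nonzero, diagonal entries `1`,
and `Q i j * Q j i = 1` for all `i, j`. -/
def IsQuantumMatrix {m : ℕ} (Q : Matrix (Fin m) (Fin m) ℂ) : Prop :=
  (∀ i j, Q i j ≠ 0) ∧ (∀ i, Q i i = 1) ∧ (∀ i j, Q i j * Q j i = 1)

/-- The point cone of a quantum matrix `Q`. -/
def pointCone {m : ℕ} (Q : Matrix (Fin m) (Fin m) ℂ) : Set (Fin m → ℂ) :=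
  {u | u ≠ 0 ∧ ∀ i j k : Fin m, i < j → j < k →
    (Q i j * Q j k - Q i k) * u i * u j * u k = 0}

namespace Matrix

variable {m n R : Type*} [Fintype n] [Field R]

theorem one_le_rank_of_apply_ne_zero {A : Matrix m n R} {i : m} {j : n} (h : A i j ≠ 0) :
    1 ≤ A.rank := by
  let r : Fin 1 → m := fun _ => i
  let c : Fin 1 → n := fun _ => j
  have hdet : (A.submatrix r c).det ≠ 0 := by simpa [r, c, det_unique] using h
  simpa [rank_of_det_ne_zero hdet] using rank_submatrix_le A r c

theorem rank_vecMulVec_eq_one {w : m → R} {v : n → R} {i : m} {j : n} (hw : w i ≠ 0)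
    (hv : v j ≠ 0) : (vecMulVec w v).rank = 1 :=
  (rank_vecMulVec_le w v).antisymm <| one_le_rank_of_apply_ne_zero (i := i) (j := j) <| by
    simpa [vecMulVec_apply] using mul_ne_zero hw hv

theorem mul_apply_eq_of_rank_le_one {A : Matrix m n R} (hA : A.rank ≤ 1) (i j : m) (k l : n) :
    A i k * A j l = A i l * A j k := by
  by_contra h
  have hdet : (A.submatrix ![i, j] ![k, l]).det ≠ 0 := by
    rwa [det_fin_two, Ne, sub_eq_zero]
  have := rank_submatrix_le A ![i, j] ![k, l]
  rw [rank_of_det_ne_zero hdet, Fintype.card_fin] at this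
  omega

end Matrix

namespace IsQuantumMatrix

variable {m : ℕ} {Q : Matrix (Fin m) (Fin m) ℂ}

theorem apply_eq_mul_apply_of_forall_le (hQ : IsQuantumMatrix Q)
    (h : ∀ i j k : Fin m, i < j → j < k → Q i k = Q i j * Q j k)
    {z : Fin m} (hz : ∀ i, z ≤ i) (i k : Fin m) : Q i k = Q i z * Q z k := by
  obtain ⟨-, hdiag, hinv⟩ := hQ
  rcases (hz i).eq_or_lt with rfl | hzi
  · rw [hdiag, one_mul]
  rcases (hz k).eq_or_lt with rfl | hzk
  · rw [hdiag, mul_one]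
  rcases lt_trichotomy i k with hik | rfl | hki
  · linear_combination -Q i z * h z i k hzi hik - Q i k * hinv i z
  · rw [hdiag, hinv]
  · linear_combination Q i z * Q i k * h z k i hzk hki + Q i z * Q z k * hinv k i
      - Q i k * hinv i z

theorem rank_eq_one_of_apply_eq_mul (hQ : IsQuantumMatrix Q) (hm : 1 ≤ m)
    (h : ∀ i j k : Fin m, i < j → j < k → Q i k = Q i j * Q j k) : Q.rank = 1 := by
  set z : Fin m := ⟨0, hm⟩
  have hQ_eq : Q = Matrix.vecMulVec (Q · z) (Q z ·) := by
    ext i k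
    exact hQ.apply_eq_mul_apply_of_forall_le h (fun _ => Nat.zero_le _) i k
  exact hQ_eq ▸ Matrix.rank_vecMulVec_eq_one (hQ.1 z z) (hQ.1 z z)

theorem apply_eq_mul_of_rank_le_one (hQ : IsQuantumMatrix Q) (hrank : Q.rank ≤ 1)
    (i j k : Fin m) : Q i k = Q i j * Q j k := by
  simpa [hQ.2.1 j] using Matrix.mul_apply_eq_of_rank_le_one hrank i j k j

end IsQuantumMatrix

theorem pointCone_eq_setOf_ne_zero {m : ℕ} {Q : Matrix (Fin m) (Fin m) ℂ}
    (h : ∀ i j k : Fin m, i < j → j < k → Q i k = Q i j * Q j k) :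
    pointCone Q = {u : Fin m → ℂ | u ≠ 0} := by
  ext u
  simp only [pointCone, Set.mem_ofPred_eq, and_iff_left_iff_imp]
  intro _ i j k hij hjk
  simp [← h i j k hij hjk]

theorem apply_eq_mul_of_pointCone_eq {m : ℕ} (hm : 1 ≤ m) {Q : Matrix (Fin m) (Fin m) ℂ}
    (hV : pointCone Q = {u : Fin m → ℂ | u ≠ 0}) (i j k : Fin m) (hij : i < j) (hjk : j < k) :
    Q i k = Q i j * Q j k := by
  have hone : (1 : Fin m → ℂ) ∈ pointCone Q := by
    rw [hV]
    exact fun h => one_ne_zero (congrFun h ⟨0, hm⟩)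
  simpa [sub_eq_zero, eq_comm] using hone.2 i j k hij hjk

theorem stmt_1 {m : ℕ} (hm : 1 ≤ m) (Q : Matrix (Fin m) (Fin m) ℂ)
    (hQ : IsQuantumMatrix Q) :
    (Q.rank = 1 ↔ ∀ i j k : Fin m, i < j → j < k → Q i k = Q i j * Q j k) ∧
    ((∀ i j k : Fin m, i < j → j < k → Q i k = Q i j * Q j k) ↔
      pointCone Q = {u : Fin m → ℂ | u ≠ 0}) :=
  ⟨⟨fun hrank i j k _ _ => hQ.apply_eq_mul_of_rank_le_one hrank.le i j k,
      hQ.rank_eq_one_of_apply_eq_mul hm⟩,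
    ⟨pointCone_eq_setOf_ne_zero, apply_eq_mul_of_pointCone_eq hm⟩⟩
end

section
/- Let Q be a quantum matrix of size m. Then the point cone V_Q is the union, over all nonempty subsets S ⊆ Fin m such that the principal submatrix Q(S) has rank 1, of the coordinate subspaces L_S. In particular V_Q is a union of (punctured) linear coordinate subspaces of ℂ^m. -/
/-- The (punctured) coordinate subspace of `ℂ^m` supported on `S`. -/
def coordSubspace {m : ℕ} (S : Set (Fin m)) : Set (Fin m → ℂ) :=
  {u | u ≠ 0 ∧ ∀ i, i ∉ S → u i = 0}

/-- The principal submatrix of `Q` with rows and columns indexed by `S`. -/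
def principalSubmatrix {m : ℕ} (Q : Matrix (Fin m) (Fin m) ℂ) (S : Finset (Fin m)) :
    Matrix {x : Fin m // x ∈ S} {x : Fin m // x ∈ S} ℂ :=
  Q.submatrix (fun i => i.1) (fun j => j.1)

/-- A square matrix with `1`s on the diagonal has rank one iff it is
"multiplicative": `M i j * M j k = M i k`. -/
lemma rank_eq_one_iff_mult {n : Type*} [Fintype n] [DecidableEq n] [Nonempty n]
    (M : Matrix n n ℂ) (hdiag : ∀ i, M i i = 1) :
    M.rank = 1 ↔ ∀ i j k, M i j * M j k = M i k := by
  constructor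
  · intro hrank i j k
    have h1 : Module.finrank ℂ (LinearMap.range M.mulVecLin) = 1 := hrank
    rw [finrank_eq_one_iff'] at h1
    obtain ⟨v, hv0, hv⟩ := h1
    set c : n → ℂ := (v : n → ℂ) with hc
    have hcol : ∀ j : n, ∃ r : ℂ, ∀ i, M i j = r * c i := by
      intro j
      have hmem : (fun i => M i j) ∈ LinearMap.range M.mulVecLin := by
        refine ⟨Pi.single j 1, ?_⟩
        ext i
        simp [Matrix.mulVecLin, Matrix.mulVec_single]
      obtain ⟨r, hr⟩ := hv ⟨_, hmem⟩
      refine ⟨r, fun i => ?_⟩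
      have h3 := congrArg (Subtype.val) hr
      have h4 := congrFun h3 i
      simpa [hc] using h4.symm
    choose r hr using hcol
    have hdiagr : ∀ i, r i * c i = 1 := fun i => by rw [← hr i i, hdiag]
    rw [hr j i, hr k j, hr k i]
    have := hdiagr j
    calc r j * c i * (r k * c j) = (r j * c j) * (r k * c i) := by ring
      _ = r k * c i := by rw [this, one_mul]
  · intro hmul
    obtain ⟨a0⟩ := ‹Nonempty n›
    set c : n → ℂ := fun i => M i a0 with hc
    have hc0 : c ≠ 0 := fun h => by
      have := congrFun h a0
      simp [hc, hdiag] at this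
    have hrange : LinearMap.range M.mulVecLin = Submodule.span ℂ {c} := by
      apply le_antisymm
      · rintro x ⟨v, rfl⟩
        rw [Submodule.mem_span_singleton]
        refine ⟨∑ j, M a0 j * v j, ?_⟩
        ext i
        simp only [Pi.smul_apply, smul_eq_mul, Matrix.mulVecLin_apply,
          Matrix.mulVec, dotProduct]
        rw [Finset.sum_mul]
        apply Finset.sum_congr rfl
        intro j _
        have : M i a0 * M a0 j = M i j := by
          have h1 := hmul i a0 j
          exact h1
        calc M a0 j * v j * c i = (M i a0 * M a0 j) * v j := by simp [hc]; ring
          _ = M i j * v j := by rw [this]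
      · rw [Submodule.span_le, Set.singleton_subset_iff]
        refine ⟨Pi.single a0 1, ?_⟩
        ext i
        simp [Matrix.mulVecLin, Matrix.mulVec_single, hc]
    rw [Matrix.rank, hrange]
    exact finrank_span_singleton hc0

theorem stmt_2 {m : ℕ} (Q : Matrix (Fin m) (Fin m) ℂ) (hQ : IsQuantumMatrix Q) :
    pointCone Q =
      ⋃ S ∈ {S : Finset (Fin m) | S.Nonempty ∧ (principalSubmatrix Q S).rank = 1},
        coordSubspace (↑S : Set (Fin m)) := by
  classical
  obtain ⟨hne, hdiag, hinv⟩ := hQ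
  -- permutation lemmas for the multiplicativity relation
  have swap12 : ∀ x y z : Fin m, Q x y * Q y z = Q x z → Q y x * Q x z = Q y z := by
    intro x y z h
    calc Q y x * Q x z = Q y x * (Q x y * Q y z) := by rw [h]
      _ = (Q x y * Q y x) * Q y z := by ring
      _ = Q y z := by rw [hinv]; ring
  have swap23 : ∀ x y z : Fin m, Q x y * Q y z = Q x z → Q x z * Q z y = Q x y := by
    intro x y z h
    calc Q x z * Q z y = (Q x y * Q y z) * Q z y := by rw [h]
      _ = Q x y * (Q y z * Q z y) := by ring
      _ = Q x y := by rw [hinv]; ring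
  ext u
  simp only [Set.mem_iUnion, Set.mem_setOf_eq, exists_prop]
  constructor
  · rintro ⟨hu0, hcone⟩
    set S : Finset (Fin m) := Finset.univ.filter (fun i => u i ≠ 0) with hS
    have hmemS : ∀ i, i ∈ S ↔ u i ≠ 0 := by
      intro i; simp [hS]
    have hSne : S.Nonempty := by
      by_contra h
      apply hu0
      ext i
      have : i ∉ S := fun hi => h ⟨i, hi⟩
      simpa [hmemS] using this
    -- base multiplicativity  for sorted triples in the support
    have hbase : ∀ i j k : Fin m, i < j → j < k → u i ≠ 0 → u j ≠ 0 → u k ≠ 0 →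
        Q i j * Q j k = Q i k := by
      intro i j k hij hjk hi hj hk
      have h2 : Q i j * Q j k - Q i k = 0 := by
        by_contra h
        exact mul_ne_zero (mul_ne_zero (mul_ne_zero h hi) hj) hk (hcone i j k hij hjk)
      exact sub_eq_zero.mp h2
    -- extend to all triples in the support
    have hmulall : ∀ i j k : Fin m, u i ≠ 0 → u j ≠ 0 → u k ≠ 0 →
        Q i j * Q j k = Q i k := by
      intro i j k hi hj hk
      by_cases hij : i = j
      · subst hij; rw [hdiag, one_mul]
      by_cases hjk : j = k
      · subst hjk; rw [hdiag, mul_one]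
      by_cases hik : i = k
      · subst hik; rw [hinv, hdiag]
      rcases lt_trichotomy i j with h1 | h1 | h1
      · rcases lt_trichotomy j k with h2 | h2 | h2
        · exact hbase i j k h1 h2 hi hj hk
        · exact absurd h2 hjk
        · rcases lt_trichotomy i k with h3 | h3 | h3
          · exact swap23 _ _ _ (hbase i k j h3 h2 hi hk hj)
          · exact absurd h3 hik
          · exact swap23 _ _ _ (swap12 _ _ _ (hbase k i j h3 h1 hk hi hj))
      · exact absurd h1 hij
      · rcases lt_trichotomy j k with h2 | h2 | h2
        · rcases lt_trichotomy i k with h3 | h3 | h3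
          · exact swap12 _ _ _ (hbase j i k h1 h3 hj hi hk)
          · exact absurd h3 hik
          · exact swap12 _ _ _ (swap23 _ _ _ (hbase j k i h2 h3 hj hk hi))
        · exact absurd h2 hjk
        · exact swap12 _ _ _ (swap23 _ _ _ (swap12 _ _ _ (hbase k j i h2 h1 hk hj hi)))
    refine ⟨S, ⟨hSne, ?_⟩, hu0, fun i hi => ?_⟩
    · haveI : Nonempty {x : Fin m // x ∈ S} := ⟨⟨hSne.choose, hSne.choose_spec⟩⟩
      apply (rank_eq_one_iff_mult (principalSubmatrix Q S) (fun a => hdiag a.1)).mpr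
      intro a b c
      exact hmulall a.1 b.1 c.1 ((hmemS _).mp a.2) ((hmemS _).mp b.2) ((hmemS _).mp c.2)
    · by_contra h
      exact hi (Finset.mem_coe.mpr ((hmemS i).mpr h))
  · rintro ⟨S, ⟨hSne, hSrank⟩, hu0, hsupp⟩
    refine ⟨hu0, fun i j k hij hjk => ?_⟩
    by_cases hi : i ∈ S
    · by_cases hj : j ∈ S
      · by_cases hk : k ∈ S
        · haveI : Nonempty {x : Fin m // x ∈ S} := ⟨⟨_, hi⟩⟩
          have hmul := (rank_eq_one_iff_mult (principalSubmatrix Q S)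
            (fun a => hdiag a.1)).mp hSrank ⟨i, hi⟩ ⟨j, hj⟩ ⟨k, hk⟩
          have : Q i j * Q j k = Q i k := hmul
          rw [this]
          ring
        · rw [hsupp k hk]; ring
      · rw [hsupp j hj]; ring
    · rw [hsupp i hi]; ring
end

section
/- Let Q and Q' be quantum matrices of size m. If for all i < j < k in Fin m one has (Q i k = Q i j · Q j k) ↔ (Q' i k = Q' i j · Q' j k), then the point cones V_Q and V_{Q'} are equal. In other words, the point variety is determined by the set of coordinate 2-planes it contains. -/
theorem stmt_5 {m : ℕ} (Q Q' : Matrix (Fin m) (Fin m) ℂ)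
    (hQ : IsQuantumMatrix Q) (hQ' : IsQuantumMatrix Q')
    (h : ∀ i j k : Fin m, i < j → j < k →
      (Q i k = Q i j * Q j k ↔ Q' i k = Q' i j * Q' j k)) :
    pointCone Q = pointCone Q' := by
  have key : ∀ (A B : Matrix (Fin m) (Fin m) ℂ),
      (∀ i j k : Fin m, i < j → j < k →
        (A i k = A i j * A j k → B i k = B i j * B j k)) →
      pointCone A ⊆ pointCone B := by
    intro A B hAB u hu
    refine ⟨hu.1, fun i j k hij hjk => ?_⟩
    have := hu.2 i j k hij hjk
    rcases mul_eq_zero.1 this with h1 | h3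
    · rcases mul_eq_zero.1 h1 with h1 | h2
      · rcases mul_eq_zero.1 h1 with h0 | h1
        · have : A i k = A i j * A j k := by
            have := sub_eq_zero.1 h0; exact this.symm
          have := hAB i j k hij hjk this
          rw [sub_eq_zero.2 this.symm]; ring
        · rw [h1]; ring
      · rw [h2]; ring
    · rw [h3]; ring
  refine Set.Subset.antisymm (key Q Q' ?_) (key Q' Q ?_) <;>
    intro i j k hij hjk
  · exact (h i j k hij hjk).1
  · exact (h i j k hij hjk).2
end

section
/- Let Q be a quantum matrix of size m, let u : Fin m → ℂ be nonzero, and let i ∈ Fin m with u i ≠ 0. Then u belongs to the point cone V_Q if and only if for all j, k ∈ Fin m with j ≠ i and k ≠ i one has (Q i j · Q j k − Q i k) · u j · u k = 0. -/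
theorem stmt_6 {m : ℕ} (Q : Matrix (Fin m) (Fin m) ℂ) (hQ : IsQuantumMatrix Q)
    (u : Fin m → ℂ) (hu : u ≠ 0) (i : Fin m) (hui : u i ≠ 0) :
    u ∈ pointCone Q ↔
      ∀ j k : Fin m, j ≠ i → k ≠ i → (Q i j * Q j k - Q i k) * u j * u k = 0 := by
  obtain ⟨hne, hdiag, hinv⟩ := hQ
  -- P a b c := (Q a b * Q b c - Q a c) * u a * u b * u c = 0 is permutation invariant
  have p12 : ∀ a b c : Fin m, (Q a b * Q b c - Q a c) * u a * u b * u c = 0 →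
      (Q b a * Q a c - Q b c) * u b * u a * u c = 0 := by
    intro a b c h
    have key : (Q b a * Q a c - Q b c) * u b * u a * u c =
        -(Q b a) * ((Q a b * Q b c - Q a c) * u a * u b * u c) := by
      linear_combination (u a * u b * u c * Q b c) * hinv b a
    rw [key, h, mul_zero]
  have p23 : ∀ a b c : Fin m, (Q a b * Q b c - Q a c) * u a * u b * u c = 0 →
      (Q a c * Q c b - Q a b) * u a * u c * u b = 0 := by
    intro a b c h
    have key : (Q a c * Q c b - Q a b) * u a * u c * u b =
        -(Q c b) * ((Q a b * Q b c - Q a c) * u a * u b * u c) := by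
      linear_combination (u a * u b * u c * Q a b) * hinv c b
    rw [key, h, mul_zero]
  constructor
  · rintro ⟨-, h⟩ j k hj hk
    by_cases hjk : j = k
    · subst hjk
      rw [hdiag j]
      ring
    -- get P i j k
    have PI : (Q i j * Q j k - Q i k) * u i * u j * u k = 0 := by
      rcases lt_trichotomy i j with hij | hij | hij
      · rcases lt_trichotomy j k with hjk' | hjk' | hjk'
        · exact h i j k hij hjk'
        · exact absurd hjk' hjk
        · rcases lt_trichotomy i k with hik | hik | hik
          · exact p23 i k j (h i k j hik hjk')
          · exact absurd hik.symm hk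
          · exact p23 i k j (p12 k i j (h k i j hik hij))
      · exact absurd hij.symm hj
      · rcases lt_trichotomy j k with hjk' | hjk' | hjk'
        · rcases lt_trichotomy i k with hik | hik | hik
          · exact p12 j i k (h j i k hij hik)
          · exact absurd hik.symm hk
          · exact p12 j i k (p23 j k i (h j k i hjk' hik))
        · exact absurd hjk' hjk
        · exact p12 j i k (p23 j k i (p12 k j i (h k j i hjk' hij)))
    have h2 : ((Q i j * Q j k - Q i k) * u j * u k) * u i = 0 := by
      linear_combination PI
    rcases mul_eq_zero.mp h2 with h3 | h3
    · exact h3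
    · exact absurd h3 hui
  · intro h
    refine ⟨hu, ?_⟩
    intro a b c hab hbc
    by_cases ha : a = i
    · subst ha
      linear_combination u a * (h b c (ne_of_gt hab) (ne_of_gt (hab.trans hbc)))
    by_cases hb : b = i
    · subst hb
      have h1 : (Q b a * Q a c - Q b c) * u b * u a * u c = 0 := by
        linear_combination u b * (h a c (ne_of_lt hab) (ne_of_gt hbc))
      exact p12 b a c h1
    by_cases hc : c = i
    · subst hc
      have h1 : (Q c a * Q a b - Q c b) * u c * u a * u b = 0 := by
        linear_combination u c * (h a b (ne_of_lt (hab.trans hbc)) (ne_of_lt hbc))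
      exact p23 a c b (p12 c a b h1)
    -- none of a, b, c equals i
    by_cases hua : u a = 0
    · rw [hua]; ring
    by_cases hub : u b = 0
    · rw [hub]; ring
    by_cases huc : u c = 0
    · rw [huc]; ring
    have extract : ∀ x y : Fin m, x ≠ i → y ≠ i → u x ≠ 0 → u y ≠ 0 →
        Q i x * Q x y - Q i y = 0 := by
      intro x y hx hy hux huy
      have hz := h x y hx hy
      rcases mul_eq_zero.mp hz with h' | h'
      · rcases mul_eq_zero.mp h' with h'' | h''
        · exact h''
        · exact absurd h'' hux
      · exact absurd h' huy
    have e1 := extract a b ha hb hua hub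
    have e2 := extract b c hb hc hub huc
    have e3 := extract a c ha hc hua huc
    have hD : Q i a * (Q a b * Q b c - Q a c) = 0 := by
      linear_combination Q b c * e1 + e2 - e3
    rcases mul_eq_zero.mp hD with h' | h'
    · exact absurd h' (hne i a)
    · rw [h']; ring
end

section
/- Let Q be a quantum matrix of size m. Then the collection C_Q is adequate. -/
/-- A collection `C` of 3-element subsets of `Fin m` is adequate if for every
`i : Fin m` and every `T ∈ C` there is a 2-element subset `S ⊆ T` with `i ∉ S`
and `S ∪ {i} ∈ C`. -/
def Adequate {m : ℕ} (C : Set (Finset (Fin m))) : Prop :=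
  ∀ i : Fin m, ∀ T ∈ C, ∃ S : Finset (Fin m),
    S ⊆ T ∧ S.card = 2 ∧ i ∉ S ∧ insert i S ∈ C

/-- The collection `C_Q` of 3-element subsets `{i,j,k}` (with `i < j < k`)
such that `Q i k ≠ Q i j * Q j k`. -/
def CQ {m : ℕ} (Q : Matrix (Fin m) (Fin m) ℂ) : Set (Finset (Fin m)) :=
  {T | ∃ i j k : Fin m, i < j ∧ j < k ∧ T = {i, j, k} ∧ Q i k ≠ Q i j * Q j k}

section Aux

variable {m : ℕ} {Q : Matrix (Fin m) (Fin m) ℂ}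

lemma qm_swap12 (hQ : IsQuantumMatrix Q) {i j k : Fin m} (h : Q i k = Q i j * Q j k) : Q j k = Q j i * Q i k := by
  rw [h, ← mul_assoc, hQ.2.2 j i, one_mul]

lemma qm_swap23 (hQ : IsQuantumMatrix Q) {i j k : Fin m} (h : Q i k = Q i j * Q j k) : Q i j = Q i k * Q k j := by
  rw [h, mul_assoc, hQ.2.2 j k, mul_one]

lemma qm_n12 (hQ : IsQuantumMatrix Q) {i j k : Fin m} (h : Q i k ≠ Q i j * Q j k) : Q j k ≠ Q j i * Q i k :=
  fun h' => h (qm_swap12 hQ h')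

lemma qm_n23 (hQ : IsQuantumMatrix Q) {i j k : Fin m} (h : Q i k ≠ Q i j * Q j k) : Q i j ≠ Q i k * Q k j :=
  fun h' => h (qm_swap23 hQ h')

lemma mem_CQ_of (hQ : IsQuantumMatrix Q) {x y z : Fin m} (hxy : x ≠ y) (hyz : y ≠ z) (hxz : x ≠ z)
    (h : Q x z ≠ Q x y * Q y z) : ({x, y, z} : Finset (Fin m)) ∈ CQ Q := by
  rcases hxy.lt_or_gt with h1 | h1 <;> rcases hyz.lt_or_gt with h2 | h2 <;>
    rcases hxz.lt_or_gt with h3 | h3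
  · exact ⟨x, y, z, h1, h2, rfl, h⟩
  · exact absurd (h1.trans h2) (asymm h3)
  · exact ⟨x, z, y, h3, h2, by ext a; simp; tauto, qm_n23 hQ h⟩
  · exact ⟨z, x, y, h3, h1, by ext a; simp; tauto, qm_n12 hQ (qm_n23 hQ h)⟩
  · exact ⟨y, x, z, h1, h3, by ext a; simp; tauto, qm_n12 hQ h⟩
  · exact ⟨y, z, x, h2, h3, by ext a; simp; tauto, qm_n23 hQ (qm_n12 hQ h)⟩
  · exact absurd (h3.trans h2) (asymm h1)
  · exact ⟨z, y, x, h2, h1, by ext a; simp; tauto,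
      qm_n23 hQ (qm_n12 hQ (qm_n23 hQ h))⟩

end Aux

theorem stmt_7 {m : ℕ} (Q : Matrix (Fin m) (Fin m) ℂ) (hQ : IsQuantumMatrix Q) :
    Adequate (CQ Q) := by
  intro i T hT
  obtain ⟨a, b, c, hab, hbc, rfl, hne3⟩ := hT
  have hac : a < c := hab.trans hbc
  by_cases hi : i ∈ ({a, b, c} : Finset (Fin m))
  · refine ⟨({a, b, c} : Finset (Fin m)).erase i, Finset.erase_subset _ _, ?_,
      Finset.notMem_erase _ _, ?_⟩
    · rw [Finset.card_erase_of_mem hi]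
      have hcard : ({a, b, c} : Finset (Fin m)).card = 3 := by
        rw [Finset.card_insert_of_notMem (by simp [hab.ne, hac.ne]),
          Finset.card_insert_of_notMem (by simp [hbc.ne]), Finset.card_singleton]
      rw [hcard]
    · rw [Finset.insert_erase hi]
      exact ⟨a, b, c, hab, hbc, rfl, hne3⟩
  · simp only [Finset.mem_insert, Finset.mem_singleton, not_or] at hi
    obtain ⟨hia, hib, hic⟩ := hi
    by_cases h1 : Q a b = Q a i * Q i b
    · by_cases h2 : Q b c = Q b i * Q i c
      · -- then Q a c ≠ Q a i * Q i c, since otherwise Q a c = Q a b * Q b c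
        have h3 : Q a c ≠ Q a i * Q i c := by
          intro h3
          apply hne3
          rw [h1, h2, h3, mul_assoc, ← mul_assoc (Q i b), hQ.2.2 i b, one_mul]
        refine ⟨{a, c}, by intro t; simp; tauto, ?_, by simp [hia, hic], ?_⟩
        · rw [Finset.card_insert_of_notMem (by simp [hac.ne]), Finset.card_singleton]
        · have : (insert i {a, c} : Finset (Fin m)) = {a, i, c} := by ext t; simp; tauto
          rw [this]
          exact mem_CQ_of hQ (Ne.symm hia) hic hac.ne h3
      · refine ⟨{b, c}, by intro t; simp; tauto, ?_, by simp [hib, hic], ?_⟩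
        · rw [Finset.card_insert_of_notMem (by simp [hbc.ne]), Finset.card_singleton]
        · have : (insert i {b, c} : Finset (Fin m)) = {b, i, c} := by ext t; simp; tauto
          rw [this]
          exact mem_CQ_of hQ (Ne.symm hib) hic hbc.ne h2
    · refine ⟨{a, b}, by intro t; simp; tauto, ?_, by simp [hia, hib], ?_⟩
      · rw [Finset.card_insert_of_notMem (by simp [hab.ne]), Finset.card_singleton]
      · have : (insert i {a, b} : Finset (Fin m)) = {a, i, b} := by ext t; simp; tauto
        rw [this]
        exact mem_CQ_of hQ (Ne.symm hia) hib hab.ne h1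
end

section
/- Let x ∈ ℂ with x ≠ 0 and x ≠ 1, and let Q be the 6×6 matrix over ℂ with rows (indexed 0–5): row 0 = (1,1,1,1,x,x), row 1 = (1,1,1,1,x,x), row 2 = (1,1,1,1,1,1), row 3 = (1,1,1,1,1,1), row 4 = (x⁻¹,x⁻¹,1,1,1,1), row 5 = (x⁻¹,x⁻¹,1,1,1,1). Then Q is a quantum matrix of size 6, C_Q = 𝒜 = {{0,2,4},{0,2,5},{0,3,4},{0,3,5},{1,2,4},{1,2,5},{1,3,4},{1,3,5}}, and the point cone V_Q equals L_{{0,1,2,3}} ∪ L_{{0,1,4,5}} ∪ L_{{2,3,4,5}}. -/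
set_option maxHeartbeats 2000000 in
theorem stmt_15 (x : ℂ) (hx0 : x ≠ 0) (hx1 : x ≠ 1)
    (Q : Matrix (Fin 6) (Fin 6) ℂ)
    (hQdef : Q = !![1,1,1,1,x,x; 1,1,1,1,x,x; 1,1,1,1,1,1; 1,1,1,1,1,1;
      x⁻¹,x⁻¹,1,1,1,1; x⁻¹,x⁻¹,1,1,1,1]) :
    IsQuantumMatrix Q ∧
    (∀ i j k : Fin 6, i < j → j < k →
      (({i, j, k} : Finset (Fin 6)) ∈
          ({{0,2,4},{0,2,5},{0,3,4},{0,3,5},{1,2,4},{1,2,5},{1,3,4},{1,3,5}} :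
            Finset (Finset (Fin 6))) ↔ Q i k ≠ Q i j * Q j k)) ∧
    pointCone Q =
      coordSubspace ({0,1,2,3} : Set (Fin 6)) ∪
      coordSubspace ({0,1,4,5} : Set (Fin 6)) ∪
      coordSubspace ({2,3,4,5} : Set (Fin 6)) := by
  subst hQdef
  set Q : Matrix (Fin 6) (Fin 6) ℂ :=
    !![1,1,1,1,x,x; 1,1,1,1,x,x; 1,1,1,1,1,1; 1,1,1,1,1,1;
      x⁻¹,x⁻¹,1,1,1,1; x⁻¹,x⁻¹,1,1,1,1] with hQ
  have hcoeff : ∀ i j k : Fin 6, i < j → j < k →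
      Q i j * Q j k = Q i k ∨ (i.val ≤ 1 ∧ 2 ≤ j.val ∧ j.val ≤ 3 ∧ 4 ≤ k.val) := by
    intro i j k hij hjk
    fin_cases i <;> fin_cases j <;> fin_cases k <;>
      first
        | exact absurd hij (by decide)
        | exact absurd hjk (by decide)
        | exact Or.inl (one_mul 1)
        | exact Or.inl (one_mul x)
        | exact Or.inl (mul_one x)
        | exact Or.inr (by decide)
  refine ⟨⟨?_, ?_, ?_⟩, ?_, ?_⟩
  · intro i j
    fin_cases i <;> fin_cases j <;>
      first | exact one_ne_zero | exact hx0 | exact inv_ne_zero hx0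
  · intro i
    fin_cases i <;> rfl
  · intro i j
    fin_cases i <;> fin_cases j <;>
      first | exact one_mul 1 | exact mul_inv_cancel₀ hx0 | exact inv_mul_cancel₀ hx0
  · intro i j k hij hjk
    fin_cases i <;> fin_cases j <;> fin_cases k <;>
      first
        | exact absurd hij (by decide)
        | exact absurd hjk (by decide)
        | exact iff_of_true (by decide) (fun h => hx1 (h.trans (one_mul 1)))
        | exact iff_of_false (by decide) (fun h => h (one_mul x).symm)
        | exact iff_of_false (by decide) (fun h => h (mul_one x).symm)
        | exact iff_of_false (by decide) (fun h => h (one_mul 1).symm)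
  · ext u
    simp only [pointCone, coordSubspace, Set.mem_union, Set.mem_setOf_eq]
    constructor
    · rintro ⟨hu, h⟩
      have hx1' : (1 : ℂ) - x ≠ 0 := sub_ne_zero_of_ne (Ne.symm hx1)
      have key : ∀ a b c : Fin 6, (1 - x) * u a * u b * u c = 0 →
          u a = 0 ∨ u b = 0 ∨ u c = 0 := by
        intro a b c h'
        rcases mul_eq_zero.mp h' with h' | hc
        · rcases mul_eq_zero.mp h' with h' | hb
          · rcases mul_eq_zero.mp h' with h' | ha
            · exact absurd h' hx1'
            · exact Or.inl ha
          · exact Or.inr (Or.inl hb)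
        · exact Or.inr (Or.inr hc)
      have e02 : Q 0 2 = 1 := rfl
      have e03 : Q 0 3 = 1 := rfl
      have e12 : Q 1 2 = 1 := rfl
      have e13 : Q 1 3 = 1 := rfl
      have e24 : Q 2 4 = 1 := rfl
      have e25 : Q 2 5 = 1 := rfl
      have e34 : Q 3 4 = 1 := rfl
      have e35 : Q 3 5 = 1 := rfl
      have e04 : Q 0 4 = x := rfl
      have e05 : Q 0 5 = x := rfl
      have e14 : Q 1 4 = x := rfl
      have e15 : Q 1 5 = x := rfl
      have p1 : u 0 = 0 ∨ u 2 = 0 ∨ u 4 = 0 := by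
        have t := h 0 2 4 (by decide) (by decide); rw [e02, e24, e04, one_mul] at t; exact key _ _ _ t
      have p2 : u 0 = 0 ∨ u 2 = 0 ∨ u 5 = 0 := by
        have t := h 0 2 5 (by decide) (by decide); rw [e02, e25, e05, one_mul] at t; exact key _ _ _ t
      have p3 : u 0 = 0 ∨ u 3 = 0 ∨ u 4 = 0 := by
        have t := h 0 3 4 (by decide) (by decide); rw [e03, e34, e04, one_mul] at t; exact key _ _ _ t
      have p4 : u 0 = 0 ∨ u 3 = 0 ∨ u 5 = 0 := by
        have t := h 0 3 5 (by decide) (by decide); rw [e03, e35, e05, one_mul] at t; exact key _ _ _ t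
      have p5 : u 1 = 0 ∨ u 2 = 0 ∨ u 4 = 0 := by
        have t := h 1 2 4 (by decide) (by decide); rw [e12, e24, e14, one_mul] at t; exact key _ _ _ t
      have p6 : u 1 = 0 ∨ u 2 = 0 ∨ u 5 = 0 := by
        have t := h 1 2 5 (by decide) (by decide); rw [e12, e25, e15, one_mul] at t; exact key _ _ _ t
      have p7 : u 1 = 0 ∨ u 3 = 0 ∨ u 4 = 0 := by
        have t := h 1 3 4 (by decide) (by decide); rw [e13, e34, e14, one_mul] at t; exact key _ _ _ t
      have p8 : u 1 = 0 ∨ u 3 = 0 ∨ u 5 = 0 := by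
        have t := h 1 3 5 (by decide) (by decide); rw [e13, e35, e15, one_mul] at t; exact key _ _ _ t
      have main : (u 4 = 0 ∧ u 5 = 0) ∨ (u 2 = 0 ∧ u 3 = 0) ∨ (u 0 = 0 ∧ u 1 = 0) := by
        by_cases h45 : u 4 = 0 ∧ u 5 = 0
        · exact Or.inl h45
        by_cases h23 : u 2 = 0 ∧ u 3 = 0
        · exact Or.inr (Or.inl h23)
        rcases not_and_or.mp h45 with hc | hc <;> rcases not_and_or.mp h23 with hb | hb
        · exact Or.inr (Or.inr ⟨p1.resolve_right (not_or.mpr ⟨hb, hc⟩),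
            p5.resolve_right (not_or.mpr ⟨hb, hc⟩)⟩)
        · exact Or.inr (Or.inr ⟨p3.resolve_right (not_or.mpr ⟨hb, hc⟩),
            p7.resolve_right (not_or.mpr ⟨hb, hc⟩)⟩)
        · exact Or.inr (Or.inr ⟨p2.resolve_right (not_or.mpr ⟨hb, hc⟩),
            p6.resolve_right (not_or.mpr ⟨hb, hc⟩)⟩)
        · exact Or.inr (Or.inr ⟨p4.resolve_right (not_or.mpr ⟨hb, hc⟩),
            p8.resolve_right (not_or.mpr ⟨hb, hc⟩)⟩)
      rcases main with ⟨h4, h5⟩ | ⟨h2, h3⟩ | ⟨h0, h1⟩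
      · refine Or.inl (Or.inl ⟨hu, fun i hi => ?_⟩)
        fin_cases i <;> first | exact h4 | exact h5 | exact absurd (by decide) hi
      · refine Or.inl (Or.inr ⟨hu, fun i hi => ?_⟩)
        fin_cases i <;> first | exact h2 | exact h3 | exact absurd (by decide) hi
      · refine Or.inr ⟨hu, fun i hi => ?_⟩
        fin_cases i <;> first | exact h0 | exact h1 | exact absurd (by decide) hi
    · have fin45 : ∀ k : Fin 6, 4 ≤ k.val → k = 4 ∨ k = 5 := by decide
      have fin23 : ∀ j : Fin 6, 2 ≤ j.val → j.val ≤ 3 → j = 2 ∨ j = 3 := by decide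
      have fin01 : ∀ i : Fin 6, i.val ≤ 1 → i = 0 ∨ i = 1 := by decide
      rintro ((⟨hu, hs⟩ | ⟨hu, hs⟩) | ⟨hu, hs⟩) <;> refine ⟨hu, fun i j k hij hjk => ?_⟩ <;>
        rcases hcoeff i j k hij hjk with hc | ⟨hi1, hj2, hj3, hk4⟩
      · rw [hc, sub_self, zero_mul, zero_mul, zero_mul]
      · have : u k = 0 := by
          rcases fin45 k hk4 with hk | hk <;> subst hk <;> exact hs _ (by decide)
        rw [this, mul_zero]
      · rw [hc, sub_self, zero_mul, zero_mul, zero_mul]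
      · have : u j = 0 := by
          rcases fin23 j hj2 hj3 with hj | hj <;> subst hj <;> exact hs _ (by decide)
        rw [this, mul_zero, zero_mul]
      · rw [hc, sub_self, zero_mul, zero_mul, zero_mul]
      · have : u i = 0 := by
          rcases fin01 i hi1 with hi | hi <;> subst hi <;> exact hs _ (by decide)
        rw [show (Q i j * Q j k - Q i k) * u i = (Q i j * Q j k - Q i k) * 0 from by rw [this],
          mul_zero, zero_mul, zero_mul]
end

section
/- Let Q be the 6×6 matrix over ℂ with rows (indexed 0–5): row 0 = (1,−1,1,1,−1,1), row 1 = (−1,1,−1,1,1,1), row 2 = (1,−1,1,−1,1,1), row 3 = (1,1,−1,1,−1,1), row 4 = (−1,1,1,−1,1,1), row 5 = (1,1,1,1,1,1). Then Q is a quantum matrix of size 6, C_Q = ℬ = {{0,1,3},{0,1,5},{0,2,4},{0,4,5},{0,2,3},{1,2,4},{1,2,5},{1,3,4},{2,3,5},{3,4,5}}, and the point cone V_Q equals the union of the ten coordinate subspaces L_T for T ∈ {{0,1,2},{1,2,3},{2,3,4},{0,3,4},{0,1,4},{0,2,5},{1,3,5},{2,4,5},{0,3,5},{1,4,5}}. 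-/
/-!
The matrix `Q` has entries `±1`, so the quantum-matrix axioms and the multiplicativity defects
`Q i k ≠ Q i j * Q j k` are finite checks over `ℤ`. A vector `u` lies in `V_Q` exactly when its
support contains no triple of `C_Q`. The twenty triples of `Fin 6` split into the ten triples of
`C_Q` and their ten complements `T`; every four indices contain a triple of `C_Q`, so the supports
avoiding `C_Q` are exactly the subsets of the `T`s.
-/

open Finset

section General

variable {m : ℕ}

theorem isQuantumMatrix_iff {Q : Matrix (Fin m) (Fin m) ℂ} :
    IsQuantumMatrix Q ↔ (∀ i, Q i i = 1) ∧ ∀ i j, Q i j * Q j i = 1 :=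
  ⟨fun h => h.2, fun h => ⟨fun i j => left_ne_zero_of_mul_eq_one (h.2 i j), h⟩⟩

theorem isQuantumMatrix_map_intCast_iff {S : Matrix (Fin m) (Fin m) ℤ} :
    IsQuantumMatrix (S.map (↑)) ↔ (∀ i, S i i = 1) ∧ ∀ i j, S i j * S j i = 1 := by
  simp only [isQuantumMatrix_iff, Matrix.map_apply]
  norm_cast

theorem mem_pointCone_iff {Q : Matrix (Fin m) (Fin m) ℂ} {u : Fin m → ℂ} :
    u ∈ pointCone Q ↔ u ≠ 0 ∧ ∀ i j k, i < j → j < k → Q i k ≠ Q i j * Q j k →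
      u i = 0 ∨ u j = 0 ∨ u k = 0 := by
  simp only [pointCone, Set.mem_ofPred_eq, mul_eq_zero, sub_eq_zero, or_assoc,
    ← or_iff_not_imp_left, eq_comm (a := Q _ _ * Q _ _)]

theorem mem_coordSubspace_iff {S : Set (Fin m)} {u : Fin m → ℂ} :
    u ∈ coordSubspace S ↔ u ≠ 0 ∧ ∀ i, u i ≠ 0 → i ∈ S := by
  simp only [coordSubspace, Set.mem_ofPred_eq, not_imp_comm]

end General

def signMatrix : Matrix (Fin 6) (Fin 6) ℤ :=
  !![1,-1,1,1,-1,1; -1,1,-1,1,1,1; 1,-1,1,-1,1,1; 1,1,-1,1,-1,1; -1,1,1,-1,1,1; 1,1,1,1,1,1]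

theorem signMatrix_map_intCast :
    signMatrix.map (↑) = (!![1,-1,1,1,-1,1; -1,1,-1,1,1,1; 1,-1,1,-1,1,1;
      1,1,-1,1,-1,1; -1,1,1,-1,1,1; 1,1,1,1,1,1] : Matrix (Fin 6) (Fin 6) ℂ) := by
  ext i j
  fin_cases i <;> fin_cases j <;> simp [signMatrix]

def circuitTriples : Finset (Finset (Fin 6)) :=
  {{0,1,3},{0,1,5},{0,2,4},{0,4,5},{0,2,3},{1,2,4},{1,2,5},{1,3,4},{2,3,5},{3,4,5}}

theorem mem_circuitTriples_iff :
    ∀ i j k : Fin 6, i < j → j < k →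
      ({i, j, k} ∈ circuitTriples ↔ signMatrix i k ≠ signMatrix i j * signMatrix j k) := by
  decide

set_option synthInstance.maxSize 2000 in
theorem circuitFree_iff : ∀ s : Finset (Fin 6),
    (∀ i j k : Fin 6, i < j → j < k → {i, j, k} ∈ circuitTriples → i ∉ s ∨ j ∉ s ∨ k ∉ s) ↔
      s ⊆ {0,1,2} ∨ s ⊆ {1,2,3} ∨ s ⊆ {2,3,4} ∨ s ⊆ {0,3,4} ∨ s ⊆ {0,1,4} ∨
      s ⊆ {0,2,5} ∨ s ⊆ {1,3,5} ∨ s ⊆ {2,4,5} ∨ s ⊆ {0,3,5} ∨ s ⊆ {1,4,5} := by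
  decide

theorem stmt_16 (Q : Matrix (Fin 6) (Fin 6) ℂ)
    (hQdef : Q = !![1,-1,1,1,-1,1; -1,1,-1,1,1,1; 1,-1,1,-1,1,1;
      1,1,-1,1,-1,1; -1,1,1,-1,1,1; 1,1,1,1,1,1]) :
    IsQuantumMatrix Q ∧
    (∀ i j k : Fin 6, i < j → j < k →
      (({i, j, k} : Finset (Fin 6)) ∈
          ({{0,1,3},{0,1,5},{0,2,4},{0,4,5},{0,2,3},{1,2,4},{1,2,5},{1,3,4},
            {2,3,5},{3,4,5}} : Finset (Finset (Fin 6))) ↔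
        Q i k ≠ Q i j * Q j k)) ∧
    pointCone Q =
      coordSubspace ({0,1,2} : Set (Fin 6)) ∪
      coordSubspace ({1,2,3} : Set (Fin 6)) ∪
      coordSubspace ({2,3,4} : Set (Fin 6)) ∪
      coordSubspace ({0,3,4} : Set (Fin 6)) ∪
      coordSubspace ({0,1,4} : Set (Fin 6)) ∪
      coordSubspace ({0,2,5} : Set (Fin 6)) ∪
      coordSubspace ({1,3,5} : Set (Fin 6)) ∪
      coordSubspace ({2,4,5} : Set (Fin 6)) ∪
      coordSubspace ({0,3,5} : Set (Fin 6)) ∪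
      coordSubspace ({1,4,5} : Set (Fin 6)) := by
  rw [← signMatrix_map_intCast] at hQdef
  have hC : ∀ i j k : Fin 6, i < j → j < k →
      ({i, j, k} ∈ circuitTriples ↔ Q i k ≠ Q i j * Q j k) := fun i j k hij hjk => by
    rw [mem_circuitTriples_iff i j k hij hjk, hQdef]
    simp only [Matrix.map_apply]
    norm_cast
  refine ⟨?_, hC, ?_⟩
  · rw [hQdef, isQuantumMatrix_map_intCast_iff]
    decide
  · ext u
    have key := circuitFree_iff (univ.filter fun i => u i ≠ 0)
    simp only [mem_filter, mem_univ, true_and, not_not, Finset.subset_iff, mem_insert,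
      mem_singleton] at key
    simp only [Set.mem_union, mem_pointCone_iff, mem_coordSubspace_iff, Set.mem_insert_iff,
      Set.mem_singleton_iff]
    rw [← forall₃_congr fun i j k => forall₂_congr fun hij hjk =>
      imp_congr_left (hC i j k hij hjk), key]
    simp only [← and_or_left, or_assoc]
end
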